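/- arXiv:1608.08080 — 2 statements merged into one kernel-verified Lean document; each statement's English description precedes it below -/
import Mathlib

section
/- In the independent model with parameters φ_i ∈ (0,1], let u_B be the block policy determined by an ordering v^1,…,v^m of the urns, with state counts x(t), and let τ(k) := ∑_{j=1}^{k−1} N_{v^j} be the first stage at which urn v^k is queried. Then for each k, Q(x(τ(k))) = ∏_{j=1}^{k−1} (1 − φ_{v^j}), and the total expected cost satisfies E[C](u_B) = ∑_{k=1}^{m} (N_{v^k} − (N_{v^k}+1)·φ_{v^k}/2) · ∏_{j=1}^{k−1} (1 − φ_{v^j}). -/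
open Finset

variable {V : Type*} [Fintype V] [DecidableEq V]

/-- `phi μ U` is the probability that every urn in `U` contains a red marble:
the sum of `μ T` over all `T ⊇ U`. -/
noncomputable def phi (μ : Finset V → ℝ) (U : Finset V) : ℝ :=
  ∑ T ∈ univ.filter (fun T => U ⊆ T), μ T

/-- `Qfun N μ x` is the probability that no red marble appears among the first
`x i` randomly drawn marbles of each urn `i`. -/
noncomputable def Qfun (N : V → ℕ) (μ : Finset V → ℝ) (x : V → ℕ) : ℝ :=
  ∑ T : Finset V, μ T * ∏ i ∈ T, (1 - (x i : ℝ) / (N i : ℝ))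

/-- `Rfun N μ U x` is the probability that no red marble has been drawn and every
urn in `U` contains a red marble. -/
noncomputable def Rfun (N : V → ℕ) (μ : Finset V → ℝ) (U : Finset V) (x : V → ℕ) : ℝ :=
  ∑ T ∈ univ.filter (fun T => U ⊆ T), μ T * ∏ i ∈ T, (1 - (x i : ℝ) / (N i : ℝ))

/-- A valid policy: a finite sequence of urn queries in which urn `i` occurs
exactly `N i` times. -/
def validPolicy (N : V → ℕ) (L : List V) : Prop := ∀ i, L.count i = N i

/-- Expected cost (expected number of blue marbles drawn) of a policy `L`. -/
noncomputable def ECost (N : V → ℕ) (μ : Finset V → ℝ) (L : List V) : ℝ :=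
  ∑ t ∈ Finset.range L.length, Qfun N μ (fun i => (L.take (t + 1)).count i)

/-- The block policy determined by an ordering `v` of the urns: query urn `v 0`
for `N (v 0)` stages, then `v 1` for `N (v 1)` stages, and so on. -/
def blockPolicy (N : V → ℕ) (v : Fin (Fintype.card V) → V) : List V :=
  (List.ofFn v).flatMap (fun i => List.replicate (N i) i)

/-- The independent model with parameters `φ i`. -/
noncomputable def muInd (φ : V → ℝ) : Finset V → ℝ :=
  fun T => (∏ i ∈ T, φ i) * ∏ j ∈ Tᶜ, (1 - φ j)

/-! In the independent model `Q` factorizes over the urns: `Q(x) = ∏ i, (1 - φ i * x i / N i)`.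
Along the block policy, every urn of an earlier block is exhausted (factor `1 - φ i`), the urn of
the current block has been drawn `s` times (factor `1 - φ a * s / N a`), and all other factors
are `1`. Summing the last factor over the `N a` stages of a block is a Gauss sum, which gives
`N a - (N a + 1) * φ a / 2`; the blocks then contribute in Horner form. -/

section BlockList

variable {α : Type*} (N : α → ℕ)

def blockList (w : List α) : List α :=
  w.flatMap fun a => List.replicate (N a) a

@[simp]
lemma blockList_nil : blockList N [] = [] := rfl

@[simp]
lemma blockList_cons (a : α) (w : List α) :
    blockList N (a :: w) = List.replicate (N a) a ++ blockList N w :=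
  List.flatMap_cons

lemma blockList_append (w₁ w₂ : List α) :
    blockList N (w₁ ++ w₂) = blockList N w₁ ++ blockList N w₂ :=
  List.flatMap_append

lemma length_blockList (w : List α) : (blockList N w).length = (w.map N).sum := by
  induction w with
  | nil => rfl
  | cons a w ih => simp [ih]

lemma take_blockList (w : List α) (k : ℕ) :
    (blockList N w).take ((w.take k).map N).sum = blockList N (w.take k) := by
  rw [← List.take_left' (l₂ := blockList N (w.drop k)) (length_blockList N (w.take k)),
    ← blockList_append, List.take_append_drop]

lemma forall_notMem_append_replicate {P w : List α} {a : α} (hPw : ∀ b ∈ a :: w, b ∉ P)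
    (haw : a ∉ w) (n : ℕ) : ∀ b ∈ w, b ∉ P ++ List.replicate n a := fun b hb => by
  simp [hPw b (List.mem_cons_of_mem a hb), ne_of_mem_of_not_mem hb haw]

end BlockList

@[to_additive]
lemma prod_map_take_ofFn {α M : Type*} [CommMonoid M] {n : ℕ} (f : Fin n → α) (g : α → M)
    (k : Fin n) : (((List.ofFn f).take k).map g).prod = ∏ j ∈ Iio k, g (f j) := by
  rw [List.map_take, List.map_ofFn, List.prod_take_ofFn, ← filter_gt_eq_Iio]
  rfl

lemma sum_range_one_sub_mul_succ_div (c : ℝ) {n : ℕ} (hn : n ≠ 0) :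
    ∑ s ∈ range n, (1 - c * ((s + 1 : ℕ) / n)) = n - (n + 1) * c / 2 := by
  have hgauss : ∀ m : ℕ, ∑ s ∈ range m, ((s + 1 : ℕ) : ℝ) = m * (m + 1) / 2 := by
    intro m
    induction m with
    | zero => simp
    | succ m ih => rw [sum_range_succ, ih]; push_cast; ring
  rw [sum_sub_distrib, sum_const, card_range, nsmul_one, ← mul_sum, ← sum_div, hgauss]
  field_simp

section BlockCost

variable {α : Type*} (N : α → ℕ) (φ : α → ℝ)

noncomputable def blockCost : List α → ℝ
  | [] => 0
  | a :: w => (N a - (N a + 1) * φ a / 2) + (1 - φ a) * blockCost w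

lemma blockCost_ofFn {n : ℕ} (f : Fin n → α) :
    blockCost N φ (List.ofFn f) =
      ∑ k, (N (f k) - (N (f k) + 1) * φ (f k) / 2) * ∏ j ∈ Iio k, (1 - φ (f j)) := by
  simp_rw [← prod_map_take_ofFn f (1 - φ ·)]
  induction n with
  | zero => simp [blockCost]
  | succ n ih =>
    simp only [Fin.sum_univ_succ, List.ofFn_succ, blockCost, ih, mul_sum, Fin.val_zero,
      Fin.val_succ, List.take_zero, List.take_succ_cons, List.map_nil, List.map_cons,
      List.prod_nil, List.prod_cons, mul_one]
    congr 1
    exact sum_congr rfl fun k _ => by ring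

end BlockCost

noncomputable def ECostAfter (N : V → ℕ) (μ : Finset V → ℝ) (P L : List V) : ℝ :=
  ∑ t ∈ range L.length, Qfun N μ (fun i => (P ++ L.take (t + 1)).count i)

lemma ECost_eq_ECostAfter_nil (N : V → ℕ) (μ : Finset V → ℝ) (L : List V) :
    ECost N μ L = ECostAfter N μ [] L := rfl

lemma ECostAfter_append (N : V → ℕ) (μ : Finset V → ℝ) (P L₁ L₂ : List V) :
    ECostAfter N μ P (L₁ ++ L₂) =
      ECostAfter N μ P L₁ + ECostAfter N μ (P ++ L₁) L₂ := by
  unfold ECostAfter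
  rw [List.length_append, sum_range_add]
  congr 1
  · refine sum_congr rfl fun t ht => ?_
    rw [List.take_append_of_le_length (mem_range.1 ht)]
  · refine sum_congr rfl fun t _ => ?_
    rw [add_assoc, List.take_length_add_append, List.append_assoc]

section Independent

variable (N : V → ℕ) (φ : V → ℝ)

lemma Qfun_muInd (x : V → ℕ) :
    Qfun N (muInd φ) x = ∏ i, (1 - φ i * (x i / N i)) := by
  have hfactor : ∀ i, 1 - φ i * (x i / N i) = φ i * (1 - x i / N i) + (1 - φ i) :=
    fun i => by ring
  simp_rw [hfactor, prod_add, powerset_univ, Qfun, muInd, compl_eq_univ_sdiff, prod_mul_distrib]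
  exact sum_congr rfl fun T _ => by ring

lemma Qfun_muInd_nil : Qfun N (muInd φ) (fun i => ([] : List V).count i) = 1 := by
  simp [Qfun_muInd]

lemma Qfun_muInd_append_replicate {P : List V} {a : V} (ha : a ∉ P) (s : ℕ) :
    Qfun N (muInd φ) (fun i => (P ++ List.replicate s a).count i) =
      Qfun N (muInd φ) (fun i => P.count i) * (1 - φ a * (s / N a)) := by
  rw [Qfun_muInd, Qfun_muInd, ← Fintype.prod_ite_eq' a (fun _ => 1 - φ a * (s / N a)),
    ← prod_mul_distrib]
  refine prod_congr rfl fun i _ => ?_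
  rcases eq_or_ne i a with rfl | hia
  · simp [List.count_eq_zero_of_not_mem ha]
  · simp [List.count_replicate, hia, hia.symm]

lemma ECostAfter_muInd_replicate {P : List V} {a : V} (ha : a ∉ P) (hNa : N a ≠ 0) :
    ECostAfter N (muInd φ) P (List.replicate (N a) a) =
      Qfun N (muInd φ) (fun i => P.count i) * (N a - (N a + 1) * φ a / 2) := by
  unfold ECostAfter
  rw [List.length_replicate, ← sum_range_one_sub_mul_succ_div (φ a) hNa, mul_sum]
  refine sum_congr rfl fun t ht => ?_
  rw [List.take_replicate, min_eq_left (mem_range.1 ht),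
    Qfun_muInd_append_replicate N φ ha, mul_comm (φ a)]

variable {N}

lemma Qfun_muInd_append_blockList (hN : ∀ i, N i ≠ 0) {w : List V} (hw : w.Nodup) {P : List V}
    (hPw : ∀ a ∈ w, a ∉ P) :
    Qfun N (muInd φ) (fun i => (P ++ blockList N w).count i) =
      Qfun N (muInd φ) (fun i => P.count i) * (w.map (1 - φ ·)).prod := by
  induction w generalizing P with
  | nil => simp
  | cons a w ih =>
    obtain ⟨haw, hw⟩ := List.nodup_cons.1 hw
    rw [blockList_cons, ← List.append_assoc,
      ih hw (forall_notMem_append_replicate hPw haw (N a)),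
      Qfun_muInd_append_replicate N φ (hPw a List.mem_cons_self), div_self (by simpa using hN a)]
    simp [mul_assoc]

lemma ECostAfter_muInd_blockList (hN : ∀ i, N i ≠ 0) {w : List V} (hw : w.Nodup) {P : List V}
    (hPw : ∀ a ∈ w, a ∉ P) :
    ECostAfter N (muInd φ) P (blockList N w) =
      Qfun N (muInd φ) (fun i => P.count i) * blockCost N φ w := by
  induction w generalizing P with
  | nil => simp [ECostAfter, blockCost]
  | cons a w ih =>
    obtain ⟨haw, hw⟩ := List.nodup_cons.1 hw
    have ha := hPw a List.mem_cons_self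
    rw [blockList_cons, ECostAfter_append, ECostAfter_muInd_replicate N φ ha (hN a),
      ih hw (forall_notMem_append_replicate hPw haw (N a)),
      Qfun_muInd_append_replicate N φ ha, div_self (by simpa using hN a), blockCost]
    ring

end Independent

theorem independent_block_policy_cost_general (N : V → ℕ) (hN : ∀ i, 1 ≤ N i)
    (φ : V → ℝ)
    (v : Fin (Fintype.card V) → V) (hv : Function.Bijective v) :
    (∀ k : Fin (Fintype.card V),
      Qfun N (muInd φ)
          (fun i => ((blockPolicy N v).take (∑ j ∈ Finset.Iio k, N (v j))).count i) =
        ∏ j ∈ Finset.Iio k, (1 - φ (v j))) ∧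
    ECost N (muInd φ) (blockPolicy N v) =
      ∑ k : Fin (Fintype.card V),
        ((N (v k) : ℝ) - ((N (v k) : ℝ) + 1) * φ (v k) / 2) *
          ∏ j ∈ Finset.Iio k, (1 - φ (v j)) := by
  have hN₀ : ∀ i, N i ≠ 0 := fun i => Nat.one_le_iff_ne_zero.1 (hN i)
  have hw : (List.ofFn v).Nodup := List.nodup_ofFn.2 hv.injective
  have hblock : blockPolicy N v = blockList N (List.ofFn v) := rfl
  refine ⟨fun k => ?_, ?_⟩
  · rw [hblock, ← sum_map_take_ofFn, take_blockList, ← List.nil_append (blockList N _),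
      Qfun_muInd_append_blockList φ hN₀ (hw.sublist (List.take_sublist _ _)) (by simp),
      Qfun_muInd_nil, one_mul, prod_map_take_ofFn]
  · rw [ECost_eq_ECostAfter_nil, hblock, ECostAfter_muInd_blockList φ hN₀ hw (by simp),
      Qfun_muInd_nil, one_mul, blockCost_ofFn]

/-- Corollary 4 of the paper: in the independent model, for the block policy
determined by an ordering `v` of the urns, the probability of reaching the
first stage of the `k`-th block without a red marble is `∏_{j<k} (1 - φ (v j))`,
and the expected cost has the stated closed form. -/
theorem independent_block_policy_cost (N : V → ℕ) (hN : ∀ i, 1 ≤ N i)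
    (φ : V → ℝ) (hφ0 : ∀ i, 0 < φ i) (hφ1 : ∀ i, φ i ≤ 1)
    (v : Fin (Fintype.card V) → V) (hv : Function.Bijective v) :
    (∀ k : Fin (Fintype.card V),
      Qfun N (muInd φ)
          (fun i => ((blockPolicy N v).take (∑ j ∈ Finset.Iio k, N (v j))).count i) =
        ∏ j ∈ Finset.Iio k, (1 - φ (v j))) ∧
    ECost N (muInd φ) (blockPolicy N v) =
      ∑ k : Fin (Fintype.card V),
        ((N (v k) : ℝ) - ((N (v k) : ℝ) + 1) * φ (v k) / 2) *
          ∏ j ∈ Finset.Iio k, (1 - φ (v j)) :=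
  independent_block_policy_cost_general N hN φ v hv
end

section
/- (Single Marble Optimality.) In the single-marble model with parameters φ_i, the block policy determined by an ordering v^1,…,v^m of the urns is optimal (its expected cost E[C] is less than or equal to the expected cost of every valid policy) if and only if φ_{v^k}/N_{v^k} ≥ φ_{v^{k+1}}/N_{v^{k+1}} for all k = 1,…,m−1. -/
open Finset

variable {V : Type*} [Fintype V] [DecidableEq V]

/-- The single-marble model with parameters `φ i`. -/
noncomputable def muSingle (φ : V → ℝ) : Finset V → ℝ :=
  fun T => if T.card = 1 then ∑ i ∈ T, φ i
    else if T = ∅ then 1 - ∑ i : V, φ i else 0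

/-!
In the single-marble model `Q(x) = 1 - ∑ᵢ (φᵢ / Nᵢ) xᵢ` is affine, so the expected cost of a
policy is `N` minus the sum of the prefix sums of its sequence of indices `φ_{u(t)} / N_{u(t)}`.
Every valid policy is a permutation of a block policy, and prefix sums of any permutation of a
list are dominated by those of its nonincreasing rearrangement; hence a block policy with
nonincreasing indices is optimal. Conversely, exchanging two adjacent blocks `a, b` changes the
cost by `N_a N_b (φ_b / N_b - φ_a / N_a)`, so in an optimal block policy the index cannot increase
from one block to the next.
-/
noncomputable def sumPrefixSums (l : List ℝ) : ℝ :=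
  ∑ t ∈ range l.length, (l.take (t + 1)).sum

@[simp]
lemma sumPrefixSums_nil : sumPrefixSums [] = 0 := rfl

lemma sumPrefixSums_cons (a : ℝ) (l : List ℝ) :
    sumPrefixSums (a :: l) = (l.length + 1) * a + sumPrefixSums l := by
  simp only [sumPrefixSums, List.length_cons, List.take_succ_cons, List.sum_cons,
    sum_add_distrib, sum_const, card_range, nsmul_eq_mul]
  rw [sum_range_succ' (fun t => (l.take t).sum)]
  simp [add_comm]

lemma sumPrefixSums_append (l₁ l₂ : List ℝ) :
    sumPrefixSums (l₁ ++ l₂) = sumPrefixSums l₁ + l₂.length * l₁.sum + sumPrefixSums l₂ := by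
  induction l₁ with
  | nil => simp
  | cons a l ih =>
    simp only [List.cons_append, sumPrefixSums_cons, ih, List.length_append, List.sum_cons]
    push_cast
    ring

lemma sumPrefixSums_swap_sub (p l₁ l₂ q : List ℝ) :
    sumPrefixSums (p ++ (l₁ ++ (l₂ ++ q))) - sumPrefixSums (p ++ (l₂ ++ (l₁ ++ q))) =
      l₂.length * l₁.sum - l₁.length * l₂.sum := by
  simp only [sumPrefixSums_append, List.length_append]
  push_cast
  ring

lemma sum_le_sum_take_of_sublist {s l : List ℝ} (hl : l.Pairwise (· ≥ ·)) (hs : s.Sublist l) :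
    s.sum ≤ (l.take s.length).sum := by
  induction l generalizing s with
  | nil => simp [List.sublist_nil.mp hs]
  | cons a l ih =>
    rcases s with _ | ⟨b, s⟩
    · simp
    · have hba : b ≤ a := by
        rcases List.mem_cons.mp (hs.subset List.mem_cons_self) with rfl | hb
        · exact le_rfl
        · exact List.rel_of_pairwise_cons hl hb
      have ih' := ih hl.of_cons (s := s) hs.tail
      simp only [List.sum_cons, List.length_cons, List.take_succ_cons]
      linarith

lemma List.Perm.sum_take_le {l' l : List ℝ} (hp : l'.Perm l) (hl : l.Pairwise (· ≥ ·)) (t : ℕ) :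
    (l'.take t).sum ≤ (l.take t).sum := by
  obtain ⟨s, hs, hsl⟩ := (l'.take_sublist t).subperm.trans hp.subperm
  have hlen : l.take s.length = l.take t := by
    rw [hs.length_eq, List.length_take, hp.length_eq, ← List.take_eq_take_min]
  rw [← hs.sum_eq, ← hlen]
  exact sum_le_sum_take_of_sublist hl hsl

lemma sumPrefixSums_le_of_perm {l' l : List ℝ} (hp : l'.Perm l) (hl : l.Pairwise (· ≥ ·)) :
    sumPrefixSums l' ≤ sumPrefixSums l := by
  rw [sumPrefixSums, sumPrefixSums, hp.length_eq]
  exact sum_le_sum fun t _ => hp.sum_take_le hl (t + 1)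

section Lists

variable {α β : Type*}

lemma validPolicy.perm [DecidableEq α] {N : α → ℕ} {L L' : List α} (hL : validPolicy N L)
    (hp : L.Perm L') : validPolicy N L' :=
  fun i => hp.count_eq i ▸ hL i

lemma pairwise_map_flatMap_replicate [Preorder β] {o : List α} {f : α → β} (n : α → ℕ)
    (ho : (o.map f).Pairwise (· ≥ ·)) :
    ((o.flatMap fun j => List.replicate (n j) j).map f).Pairwise (· ≥ ·) := by
  simp only [List.map_flatMap, List.map_replicate, List.pairwise_flatMap, List.pairwise_replicate]
  refine ⟨fun _ _ => Or.inr le_rfl, (List.pairwise_map.mp ho).imp fun h x hx y hy => ?_⟩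
  rwa [List.eq_of_mem_replicate hx, List.eq_of_mem_replicate hy]

lemma List.exists_ofFn_eq_append_cons_cons {n : ℕ} (v : Fin n → α) (k : ℕ) (hk : k + 1 < n) :
    ∃ A B, List.ofFn v = A ++ v ⟨k, Nat.lt_of_succ_lt hk⟩ :: v ⟨k + 1, hk⟩ :: B := by
  refine ⟨(List.ofFn v).take k, (List.ofFn v).drop (k + 2), ?_⟩
  conv_lhs => rw [← List.take_append_drop k (List.ofFn v)]
  rw [List.drop_eq_getElem_cons (by rw [List.length_ofFn]; omega),
    List.drop_eq_getElem_cons (by rw [List.length_ofFn]; omega)]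
  simp

lemma Fin.antitone_of_succ_le [Preorder β] {n : ℕ} {f : Fin n → β}
    (hf : ∀ k : ℕ, (hk : k + 1 < n) → f ⟨k + 1, hk⟩ ≤ f ⟨k, Nat.lt_of_succ_lt hk⟩) : Antitone f := by
  cases n with
  | zero => exact fun i => i.elim0
  | succ n => exact Fin.antitone_iff_succ_le.mpr fun i => hf i (by omega)

end Lists

lemma Qfun_muSingle (N : V → ℕ) (φ : V → ℝ) (x : V → ℕ) :
    Qfun N (muSingle φ) x = 1 - ∑ i, φ i / N i * x i := by
  set S : Finset (Finset V) := insert ∅ (univ.map ⟨singleton, singleton_injective⟩)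
  have hS : ∀ T ∉ S, muSingle φ T = 0 := by
    intro T hT
    simp only [S, mem_insert, mem_map, mem_univ, true_and, not_or] at hT
    have hcard : T.card ≠ 1 := fun h => by
      obtain ⟨i, rfl⟩ := card_eq_one.mp h
      exact hT.2 ⟨i, rfl⟩
    simp [muSingle, hcard, hT.1]
  rw [Qfun, ← sum_subset (subset_univ S) fun T _ hT => by rw [hS T hT, zero_mul],
    sum_insert (by simp), sum_map]
  simp only [muSingle, card_empty, zero_ne_one, ↓reduceIte, prod_empty, mul_one,
    Function.Embedding.coeFn_mk, card_singleton, sum_singleton, prod_singleton]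
  have hlin : ∑ i, φ i * (1 - (x i : ℝ) / N i) = ∑ i, φ i - ∑ i, φ i / N i * x i := by
    rw [← sum_sub_distrib]
    exact sum_congr rfl fun i _ => by ring
  rw [hlin]
  ring

lemma sum_count_mul_eq_sum_map (l : List V) (f : V → ℝ) :
    ∑ i, (l.count i : ℝ) * f i = (l.map f).sum := by
  rw [sum_list_map_count, ← sum_subset (subset_univ l.toFinset) fun i _ hi => by
    rw [List.count_eq_zero_of_not_mem (by simpa using hi), Nat.cast_zero, zero_mul]]
  simp [nsmul_eq_mul]

lemma ECost_muSingle (N : V → ℕ) (φ : V → ℝ) (L : List V) :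
    ECost N (muSingle φ) L = L.length - sumPrefixSums (L.map fun i => φ i / N i) := by
  simp only [ECost, sumPrefixSums, List.length_map, Qfun_muSingle, ← List.map_take,
    ← sum_count_mul_eq_sum_map, mul_comm (φ _ / _), sum_sub_distrib, sum_const, card_range,
    nsmul_eq_mul, mul_one]

lemma ECost_muSingle_swap_sub (N : V → ℕ) (φ : V → ℝ) (P X Y Q : List V) :
    ECost N (muSingle φ) (P ++ (X ++ (Y ++ Q))) - ECost N (muSingle φ) (P ++ (Y ++ (X ++ Q))) =
      X.length * (Y.map fun i => φ i / N i).sum - Y.length * (X.map fun i => φ i / N i).sum := by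
  have h := sumPrefixSums_swap_sub (P.map fun i => φ i / N i) (X.map fun i => φ i / N i)
    (Y.map fun i => φ i / N i) (Q.map fun i => φ i / N i)
  simp only [List.length_map] at h
  simp only [ECost_muSingle, List.map_append, List.length_append]
  push_cast
  linarith

lemma count_blockPolicy (N : V → ℕ) {v : Fin (Fintype.card V) → V} (hv : Function.Bijective v)
    (i : V) : (blockPolicy N v).count i = N i := by
  simp only [blockPolicy, List.count_flatMap, List.map_ofFn, List.sum_ofFn, Function.comp_apply,
    List.count_replicate, beq_iff_eq]
  rw [Fintype.sum_bijective v hv _ (fun j => if j = i then N j else 0) fun _ => rfl]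
  simp

lemma validPolicy_blockPolicy (N : V → ℕ) {v : Fin (Fintype.card V) → V}
    (hv : Function.Bijective v) : validPolicy N (blockPolicy N v) :=
  count_blockPolicy N hv

lemma validPolicy.perm_blockPolicy {N : V → ℕ} {L : List V} (hL : validPolicy N L)
    {v : Fin (Fintype.card V) → V} (hv : Function.Bijective v) : L.Perm (blockPolicy N v) :=
  List.perm_iff_count.mpr fun i => by rw [hL i, count_blockPolicy N hv]

lemma blockPolicy_optimal_of_antitone (N : V → ℕ) (φ : V → ℝ) {v : Fin (Fintype.card V) → V}
    (hv : Function.Bijective v) (hanti : Antitone ((fun i => φ i / N i) ∘ v))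
    {L : List V} (hL : validPolicy N L) :
    ECost N (muSingle φ) (blockPolicy N v) ≤ ECost N (muSingle φ) L := by
  have hp := hL.perm_blockPolicy hv
  have hsorted : ((blockPolicy N v).map fun i => φ i / N i).Pairwise (· ≥ ·) :=
    pairwise_map_flatMap_replicate N <| by
      rw [List.map_ofFn]
      exact List.pairwise_ofFn.mpr fun _ _ h => hanti h.le
  rw [ECost_muSingle, ECost_muSingle, hp.length_eq]
  linarith [sumPrefixSums_le_of_perm (hp.map _) hsorted]

lemma succ_le_of_blockPolicy_optimal {N : V → ℕ} (hN : ∀ i, 1 ≤ N i) (φ : V → ℝ)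
    {v : Fin (Fintype.card V) → V} (hv : Function.Bijective v)
    (hopt : ∀ L, validPolicy N L →
      ECost N (muSingle φ) (blockPolicy N v) ≤ ECost N (muSingle φ) L)
    (k : ℕ) (hk : k + 1 < Fintype.card V) :
    φ (v ⟨k + 1, hk⟩) / N (v ⟨k + 1, hk⟩) ≤
      φ (v ⟨k, Nat.lt_of_succ_lt hk⟩) / N (v ⟨k, Nat.lt_of_succ_lt hk⟩) := by
  obtain ⟨A, B, hsplit⟩ := List.exists_ofFn_eq_append_cons_cons v k hk
  set a := v ⟨k, Nat.lt_of_succ_lt hk⟩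
  set b := v ⟨k + 1, hk⟩
  set P := A.flatMap fun j => List.replicate (N j) j
  set Q := B.flatMap fun j => List.replicate (N j) j
  have hblock : blockPolicy N v =
      P ++ (List.replicate (N a) a ++ (List.replicate (N b) b ++ Q)) := by
    simp only [blockPolicy, hsplit, List.flatMap_append, List.flatMap_cons, P, Q]
  have hswap := hopt (P ++ (List.replicate (N b) b ++ (List.replicate (N a) a ++ Q))) <|
    (validPolicy_blockPolicy N hv).perm
      (hblock ▸ (List.perm_append_comm_assoc _ _ _).append_left P)
  have hdiff := ECost_muSingle_swap_sub N φ P (List.replicate (N a) a) (List.replicate (N b) b) Q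
  simp only [List.length_replicate, List.map_replicate, List.sum_replicate, nsmul_eq_mul] at hdiff
  rw [← hblock] at hdiff
  have hcost : (N a * N b : ℝ) * (φ b / N b - φ a / N a) ≤ 0 := by linarith
  exact sub_nonpos.mp <| nonpos_of_mul_nonpos_right hcost <|
    mul_pos (Nat.cast_pos.mpr (hN a)) (Nat.cast_pos.mpr (hN b))

theorem single_marble_optimality_general (N : V → ℕ) (hN : ∀ i, 1 ≤ N i)
    (φ : V → ℝ)
    (v : Fin (Fintype.card V) → V) (hv : Function.Bijective v) :
    (∀ L : List V, validPolicy N L →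
        ECost N (muSingle φ) (blockPolicy N v) ≤ ECost N (muSingle φ) L) ↔
      ∀ k : ℕ, (hk : k + 1 < Fintype.card V) →
        φ (v ⟨k + 1, hk⟩) / (N (v ⟨k + 1, hk⟩) : ℝ) ≤
          φ (v ⟨k, Nat.lt_of_succ_lt hk⟩) / (N (v ⟨k, Nat.lt_of_succ_lt hk⟩) : ℝ) :=
  ⟨succ_le_of_blockPolicy_optimal hN φ hv, fun hmono _ hL =>
    blockPolicy_optimal_of_antitone N φ hv (Fin.antitone_of_succ_le hmono) hL⟩

/-- **Single Marble Optimality** (Theorem 6 of the paper): in the single-marble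
model, the block policy determined by an ordering `v` is optimal if and only if
the index `φ i / N i` is nonincreasing along `v`. -/
theorem single_marble_optimality (N : V → ℕ) (hN : ∀ i, 1 ≤ N i)
    (φ : V → ℝ) (hφ0 : ∀ i, 0 < φ i) (hφ1 : ∑ i : V, φ i ≤ 1)
    (v : Fin (Fintype.card V) → V) (hv : Function.Bijective v) :
    (∀ L : List V, validPolicy N L →
        ECost N (muSingle φ) (blockPolicy N v) ≤ ECost N (muSingle φ) L) ↔
      ∀ k : ℕ, (hk : k + 1 < Fintype.card V) →
        φ (v ⟨k + 1, hk⟩) / (N (v ⟨k + 1, hk⟩) : ℝ) ≤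
          φ (v ⟨k, Nat.lt_of_succ_lt hk⟩) / (N (v ⟨k, Nat.lt_of_succ_lt hk⟩) : ℝ) :=
  single_marble_optimality_general N hN φ v hv
end
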